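/- arXiv:2504.05546 — 2 statements merged into one kernel-verified Lean document; each statement's English description precedes it below -/
import Mathlib

section
/- Let I ⊂ (0,∞) be an open interval and let f : I → (0,∞) be twice continuously differentiable and satisfy (f^m)''(ξ) + ((N-1)/ξ)(f^m)'(ξ) − α f(ξ) + β ξ f'(ξ) + ξ^σ f(ξ)^p = 0 on I. Define X(ξ) := (m/α) ξ^{-2} f(ξ)^{m-1}, Y(ξ) := (m/α) ξ^{-1} f(ξ)^{m-2} f'(ξ), Z(ξ) := (1/α) ξ^σ f(ξ)^{p-1}. Then for all ξ ∈ I: X'(ξ) = (α/m) ξ f(ξ)^{1-m} · X(ξ)[(m-1)Y(ξ) − 2X(ξ)], Y'(ξ) = (α/m) ξ f(ξ)^{1-m} · [−Y(ξ)² − (β/α)Y(ξ) + X(ξ) − N X(ξ)Y(ξ) − X(ξ)Z(ξ)], and Z'(ξ) = (α/m) ξ f(ξ)^{1-m} · Z(ξ)[(p-1)Y(ξ) + σ X(ξ)]. -/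
/-! With dη/dξ = T := (α/m) ξ f^{1-m}, one has T·X = 1/ξ and T·Y = f'/f.
X and Z are constant multiples of monomials ξ^a f^b, whose logarithmic derivative is
a/ξ + b f'/f = T(aX + bY); this gives the equations for X and Z. Writing
Y = (1/α) ξ⁻¹ f⁻¹ (f^m)', the equation for Y follows from the product rule once (f^m)'' is
eliminated with the profile ODE. -/

open Set Filter Topology

theorem HasDerivAt.rpow_mul_rpow {f : ℝ → ℝ} {f' x : ℝ} (hf : HasDerivAt f f' x) (hx : 0 < x)
    (hfx : 0 < f x) (a b : ℝ) :
    HasDerivAt (fun s => s ^ a * f s ^ b) (x ^ a * f x ^ b * (a / x + b * f' / f x)) x := by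
  refine ((Real.hasDerivAt_rpow_const (p := a) (Or.inl hx.ne')).mul
    (hf.rpow_const (p := b) (Or.inl hfx.ne'))).congr_deriv ?_
  rw [Real.rpow_sub_one hx.ne', Real.rpow_sub_one hfx.ne']
  field_simp

namespace SelfSimilar

-- T = dη/dξ
noncomputable def timeScale (m α : ℝ) (f : ℝ → ℝ) (ξ : ℝ) : ℝ := α / m * ξ * f ξ ^ (1 - m)

variable {m α ξ : ℝ} {f : ℝ → ℝ}

theorem timeScale_mul_X {X : ℝ → ℝ} (hm : m ≠ 0) (hα : α ≠ 0) (hξ : ξ ≠ 0) (hfξ : 0 < f ξ)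
    (hX : X ξ = m / α * f ξ ^ (m - 1) / ξ ^ 2) :
    timeScale m α f ξ * X ξ = 1 / ξ := by
  have : f ξ ^ (1 - m) * f ξ ^ (m - 1) = 1 := by
    rw [← Real.rpow_add hfξ]; norm_num
  rw [timeScale, hX]
  field_simp
  linear_combination this

theorem timeScale_mul_Y {Y : ℝ → ℝ} {d : ℝ} (hm : m ≠ 0) (hα : α ≠ 0) (hξ : ξ ≠ 0)
    (hfξ : 0 < f ξ) (hY : Y ξ = m / α * f ξ ^ (m - 2) * d / ξ) :
    timeScale m α f ξ * Y ξ = d / f ξ := by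
  have : f ξ ^ (1 - m) * f ξ ^ (m - 2) * f ξ = 1 := by
    rw [← Real.rpow_add hfξ, ← Real.rpow_add_one (by positivity)]; norm_num
  rw [timeScale, hY]
  field_simp
  linear_combination d * this

theorem hasDerivAt_X {X Y : ℝ → ℝ} {d : ℝ} (hm : m ≠ 0) (hα : α ≠ 0) (hξ : 0 < ξ)
    (hfξ : 0 < f ξ) (hf : HasDerivAt f d ξ)
    (hX : ∀ s, X s = m / α * f s ^ (m - 1) / s ^ 2)
    (hY : Y ξ = m / α * f ξ ^ (m - 2) * d / ξ) :
    HasDerivAt X (timeScale m α f ξ * (X ξ * ((m - 1) * Y ξ - 2 * X ξ))) ξ := by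
  have hXeq : X =ᶠ[𝓝 ξ] fun s => m / α * (s ^ (-2 : ℝ) * f s ^ (m - 1)) := by
    filter_upwards [lt_mem_nhds hξ] with s hs
    rw [hX, Real.rpow_neg hs.le, Real.rpow_two]
    ring
  refine (((hf.rpow_mul_rpow hξ hfξ (-2) (m - 1)).const_mul (m / α)).congr_of_eventuallyEq
    hXeq).congr_deriv ?_
  linear_combination X ξ * (2 * timeScale_mul_X hm hα hξ.ne' hfξ (hX ξ)
    - (m - 1) * timeScale_mul_Y hm hα hξ.ne' hfξ hY)
    - (-2 / ξ + (m - 1) * d / f ξ) * hXeq.eq_of_nhds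

theorem hasDerivAt_Z {X Y Z : ℝ → ℝ} {d p σ : ℝ} (hm : m ≠ 0) (hα : α ≠ 0) (hξ : 0 < ξ)
    (hfξ : 0 < f ξ) (hf : HasDerivAt f d ξ)
    (hX : X ξ = m / α * f ξ ^ (m - 1) / ξ ^ 2)
    (hY : Y ξ = m / α * f ξ ^ (m - 2) * d / ξ)
    (hZ : ∀ s, Z s = 1 / α * s ^ σ * f s ^ (p - 1)) :
    HasDerivAt Z (timeScale m α f ξ * (Z ξ * ((p - 1) * Y ξ + σ * X ξ))) ξ := by
  obtain rfl : Z = fun s => 1 / α * (s ^ σ * f s ^ (p - 1)) := by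
    ext s; rw [hZ, mul_assoc]
  refine ((hf.rpow_mul_rpow hξ hfξ σ (p - 1)).const_mul (1 / α)).congr_deriv ?_
  linear_combination -(1 / α * (ξ ^ σ * f ξ ^ (p - 1))) *
    (σ * timeScale_mul_X hm hα hξ.ne' hfξ hX + (p - 1) * timeScale_mul_Y hm hα hξ.ne' hfξ hY)

theorem hasDerivAt_Y {X Y Z : ℝ → ℝ} {N β σ p : ℝ} (hm : m ≠ 0) (hα : α ≠ 0) (hξ : 0 < ξ)
    (hf : ∀ᶠ s in 𝓝 ξ, 0 < f s ∧ HasDerivAt f (deriv f s) s)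
    (hflux : DifferentiableAt ℝ (deriv fun s => f s ^ m) ξ)
    (hode : deriv (deriv fun s => f s ^ m) ξ + (N - 1) / ξ * deriv (fun s => f s ^ m) ξ
      - α * f ξ + β * ξ * deriv f ξ + ξ ^ σ * f ξ ^ p = 0)
    (hX : X ξ = m / α * f ξ ^ (m - 1) / ξ ^ 2)
    (hY : ∀ s, Y s = m / α * f s ^ (m - 2) * deriv f s / s)
    (hZ : Z ξ = 1 / α * ξ ^ σ * f ξ ^ (p - 1)) :
    HasDerivAt Y (timeScale m α f ξ *
      (-(Y ξ) ^ 2 - β / α * Y ξ + X ξ - N * X ξ * Y ξ - X ξ * Z ξ)) ξ := by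
  set g := deriv fun s => f s ^ m with hg
  obtain ⟨hfξ, hdξ⟩ := hf.self_of_nhds
  have hYeq : Y =ᶠ[𝓝 ξ] fun s => 1 / α * (s ^ (-1 : ℝ) * f s ^ (-1 : ℝ)) * g s := by
    filter_upwards [hf, lt_mem_nhds hξ] with s ⟨hfs, hds⟩ hs
    rw [hY, hg, (hds.rpow_const (p := m) (Or.inl hfs.ne')).deriv, Real.rpow_neg_one,
      Real.rpow_neg_one, show m - 2 = m - 1 - 1 by ring, Real.rpow_sub_one hfs.ne']
    field_simp
  have hYξ : Y ξ = 1 / α * (ξ⁻¹ * (f ξ)⁻¹) * g ξ := by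
    simpa only [Real.rpow_neg_one] using hYeq.eq_of_nhds
  have hp : f ξ ^ p = f ξ ^ (p - 1) * f ξ := by
    rw [← Real.rpow_add_one hfξ.ne']; ring_nf
  refine (((hdξ.rpow_mul_rpow hξ hfξ (-1) (-1)).const_mul (1 / α)).mul
    hflux.hasDerivAt |>.congr_of_eventuallyEq hYeq).congr_deriv ?_
  rw [Real.rpow_neg_one, Real.rpow_neg_one]
  calc _ = 1 / α * (ξ⁻¹ * (f ξ)⁻¹ * (-1 / ξ + -1 * deriv f ξ / f ξ)) * g ξ
        + 1 / α * (ξ⁻¹ * (f ξ)⁻¹) * ((1 - N) / ξ * g ξ + α * f ξ - β * ξ * deriv f ξ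
          - ξ ^ σ * f ξ ^ p) := by
          congr 2
          linear_combination hode
    _ = -(deriv f ξ / f ξ) * Y ξ - β / α * (deriv f ξ / f ξ) + 1 / ξ - N * (1 / ξ) * Y ξ
        - 1 / ξ * Z ξ := by
          rw [hYξ, hZ, hp]
          field_simp
          ring
    _ = _ := by
          rw [← timeScale_mul_X hm hα hξ.ne' hfξ hX, ← timeScale_mul_Y hm hα hξ.ne' hfξ (hY ξ)]
          ring

end SelfSimilar

open SelfSimilar in
theorem stmt_8_general {N : ℕ} (m p σ L α β : ℝ)
    (hm : 1 < m)
    (hσl : max (-(N : ℝ)) (-2) < σ)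
    (hLneg : L < 0)
    (hα : α = -(σ + 2) / L)
    (I : Set ℝ) (hIopen : IsOpen I) (hIpos : I ⊆ Ioi 0)
    (f : ℝ → ℝ) (hfpos : ∀ ξ ∈ I, 0 < f ξ) (hf : ContDiffOn ℝ 2 f I)
    (hode : ∀ ξ ∈ I,
      deriv (deriv (fun s => f s ^ m)) ξ + ((N - 1 : ℝ) / ξ) * deriv (fun s => f s ^ m) ξ
        - α * f ξ + β * ξ * deriv f ξ + ξ ^ σ * f ξ ^ p = 0)
    (X Y Z : ℝ → ℝ)
    (hX : ∀ s, X s = m / α * (f s) ^ (m - 1) / s ^ 2)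
    (hY : ∀ s, Y s = m / α * (f s) ^ (m - 2) * deriv f s / s)
    (hZ : ∀ s, Z s = 1 / α * s ^ σ * (f s) ^ (p - 1)) :
    ∀ ξ ∈ I,
      HasDerivAt X (α / m * ξ * (f ξ) ^ (1 - m) *
        (X ξ * ((m - 1) * Y ξ - 2 * X ξ))) ξ ∧
      HasDerivAt Y (α / m * ξ * (f ξ) ^ (1 - m) *
        (-(Y ξ) ^ 2 - β / α * Y ξ + X ξ - N * X ξ * Y ξ - X ξ * Z ξ)) ξ ∧
      HasDerivAt Z (α / m * ξ * (f ξ) ^ (1 - m) *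
        (Z ξ * ((p - 1) * Y ξ + σ * X ξ))) ξ := by
  intro ξ hξ
  have hm0 : m ≠ 0 := by linarith
  have hα0 : α ≠ 0 := by
    rw [hα]
    exact (div_pos_of_neg_of_neg (by linarith [le_max_right (-(N : ℝ)) (-2)]) hLneg).ne'
  have hfI : ∀ᶠ s in 𝓝 ξ, 0 < f s ∧ HasDerivAt f (deriv f s) s := by
    filter_upwards [hIopen.mem_nhds hξ] with s hs
    exact ⟨hfpos s hs,
      ((hf.contDiffAt (hIopen.mem_nhds hs)).differentiableAt (by norm_num)).hasDerivAt⟩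
  have hflux : DifferentiableAt ℝ (deriv fun s => f s ^ m) ξ :=
    (((hf.rpow_const_of_ne fun s hs => (hfpos s hs).ne').deriv_of_isOpen (m := 1)
      hIopen (by norm_num)).contDiffAt (hIopen.mem_nhds hξ)).differentiableAt (by norm_num)
  obtain ⟨hfξ, hdξ⟩ := hfI.self_of_nhds
  exact ⟨hasDerivAt_X hm0 hα0 (hIpos hξ) hfξ hdξ hX (hY ξ),
    hasDerivAt_Y hm0 hα0 (hIpos hξ) hfI hflux (hode ξ hξ) (hX ξ) hY (hZ ξ),
    hasDerivAt_Z hm0 hα0 (hIpos hξ) hfξ hdξ (hX ξ) (hY ξ) hZ⟩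

/-- The change of variables
`X = (m/α) ξ^{-2} f^{m-1}`, `Y = (m/α) ξ^{-1} f^{m-2} f'`, `Z = (1/α) ξ^σ f^{p-1}`
transforms the self-similar profile ODE into the autonomous dynamical system
`Ẋ = X[(m-1)Y - 2X]`, `Ẏ = -Y² - (β/α)Y + X - NXY - XZ`, `Ż = Z[(p-1)Y + σX]`,
where the new independent variable `η` satisfies `dη/dξ = (α/m) ξ f^{1-m}`. -/
theorem stmt_8 {N : ℕ} (hN : 1 ≤ N) (m p σ L α β : ℝ)
    (hm : 1 < m) (hp1 : 1 < p) (hpm : p < m)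
    (hσl : max (-(N : ℝ)) (-2) < σ) (hσu : σ < -(2 * (p - 1)) / (m - 1))
    (hL : L = σ * (m - 1) + 2 * (p - 1)) (hLneg : L < 0)
    (hα : α = -(σ + 2) / L) (hβ : β = -(m - p) / L)
    (I : Set ℝ) (hIopen : IsOpen I) (hIconn : I.OrdConnected) (hIpos : I ⊆ Ioi 0)
    (f : ℝ → ℝ) (hfpos : ∀ ξ ∈ I, 0 < f ξ) (hf : ContDiffOn ℝ 2 f I)
    (hode : ∀ ξ ∈ I,
      deriv (deriv (fun s => f s ^ m)) ξ + ((N - 1 : ℝ) / ξ) * deriv (fun s => f s ^ m) ξ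
        - α * f ξ + β * ξ * deriv f ξ + ξ ^ σ * f ξ ^ p = 0)
    (X Y Z : ℝ → ℝ)
    (hX : ∀ s, X s = m / α * (f s) ^ (m - 1) / s ^ 2)
    (hY : ∀ s, Y s = m / α * (f s) ^ (m - 2) * deriv f s / s)
    (hZ : ∀ s, Z s = 1 / α * s ^ σ * (f s) ^ (p - 1)) :
    ∀ ξ ∈ I,
      HasDerivAt X (α / m * ξ * (f ξ) ^ (1 - m) *
        (X ξ * ((m - 1) * Y ξ - 2 * X ξ))) ξ ∧
      HasDerivAt Y (α / m * ξ * (f ξ) ^ (1 - m) *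
        (-(Y ξ) ^ 2 - β / α * Y ξ + X ξ - N * X ξ * Y ξ - X ξ * Z ξ)) ξ ∧
      HasDerivAt Z (α / m * ξ * (f ξ) ^ (1 - m) *
        (Z ξ * ((p - 1) * Y ξ + σ * X ξ))) ξ :=
  stmt_8_general m p σ L α β hm hσl hLneg hα I hIopen hIpos f hfpos hf hode X Y Z hX hY hZ
end

section
/- Let b > 0 and q > 0 be real numbers. There exists a maximal solution (Y, W) : (η_-, η_+) → ℝ² (with −∞ ≤ η_- < η_+ ≤ ∞) of the planar system Y' = −Y² − bY − W, W' = qYW, such that W(η) > 0 for all η ∈ (η_-, η_+), Y(η) → +∞ as η → η_-^+, and Y(η) → −∞ as η → η_+^-. -/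
/-!
Along a solution of the damped oscillator `x'' + b x' + c x ^ (q + 1) = 0` with `x > 0`, the
functions `Y = x' / x` and `W = c x ^ q` solve `Y' = -Y² - bY - W`, `W' = qYW`. So it suffices to
find an arc of the oscillator that leaves `x = 0` with positive speed and returns to `x = 0` with
negative speed: then `Y → +∞` at the start and `Y → -∞` at the end. Rescaling time by `κ` turns
the damping `ε` into `κε`, so one arc for a single small damping `ε > 0` serves every `b > 0`.

Start from `(x, x') = (0, 1)`. The energy `x'² / 2 + x ^ (q + 2) / (q + 2)` decreases at rate
`ε x'²`, so for small `ε` it stays in `[1/4, 1/2]` for a long time. Meanwhile `x < 2`, the speed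
falls below `1/2` once `x` has grown, then below `-1/2` (while `|x'| ≤ 1/2` the energy keeps `x`
away from `0`, so the restoring force beats the damping), and then `x` reaches `0`. Truncating the
nonlinearity and the speed gives a globally Lipschitz, bounded field, hence a solution on the
whole time interval by Picard–Lindelöf; the bounds above show the truncation is never active.
-/

open Filter Topology Set NNReal

section RealCalculus

variable {f f' : ℝ → ℝ} {a b : ℝ}

theorem le_of_hasDerivAt_neg_of_eq {c : ℝ} (hf : ∀ t ∈ Icc a b, HasDerivAt f (f' t) t)
    (ha : f a ≤ c) (hc : ∀ t ∈ Ico a b, f t = c → f' t < 0) : ∀ t ∈ Icc a b, f t ≤ c :=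
  image_le_of_deriv_right_lt_deriv_boundary'
    (fun t ht ↦ (hf t ht).continuousAt.continuousWithinAt)
    (fun t ht ↦ (hf t (Ico_subset_Icc_self ht)).hasDerivWithinAt) ha continuousOn_const
    (fun _ _ ↦ hasDerivWithinAt_const _ _ c) hc

theorem le_add_mul_sub_of_hasDerivAt_le {m : ℝ} (hf : ∀ t ∈ Icc a b, HasDerivAt f (f' t) t)
    (hm : ∀ t ∈ Icc a b, f' t ≤ m) : ∀ t ∈ Icc a b, f t ≤ f a + m * (t - a) := by
  have hB : ∀ t, HasDerivAt (fun s ↦ f a + m * (s - a)) m t := fun t ↦ by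
    simpa using ((hasDerivAt_id t).sub_const a).const_mul m |>.const_add (f a)
  exact image_le_of_deriv_right_le_deriv_boundary
    (fun t ht ↦ (hf t ht).continuousAt.continuousWithinAt)
    (fun t ht ↦ (hf t (Ico_subset_Icc_self ht)).hasDerivWithinAt) (by simp)
    (fun t _ ↦ (hB t).continuousAt.continuousWithinAt) (fun t _ ↦ (hB t).hasDerivWithinAt)
    (fun t ht ↦ hm t (Ico_subset_Icc_self ht))

theorem add_mul_sub_le_of_le_hasDerivAt {m : ℝ} (hf : ∀ t ∈ Icc a b, HasDerivAt f (f' t) t)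
    (hm : ∀ t ∈ Icc a b, m ≤ f' t) : ∀ t ∈ Icc a b, f a + m * (t - a) ≤ f t := by
  intro t ht
  have := le_add_mul_sub_of_hasDerivAt_le (fun s hs ↦ (hf s hs).neg) (m := -m)
    (fun s hs ↦ neg_le_neg (hm s hs)) t ht
  simp only [Pi.neg_apply] at this
  linarith

theorem HasDerivAt.eventually_nhdsGT_lt (hf : HasDerivAt f (f' a) a) (hpos : 0 < f' a) :
    ∀ᶠ t in 𝓝[>] a, f a < f t := by
  filter_upwards [(hasDerivAt_iff_tendsto_slope_left_right.1 hf).2.eventually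
    (eventually_gt_nhds hpos), self_mem_nhdsWithin] with t ht hat
  rw [slope_def_field] at ht
  exact sub_pos.1 ((div_pos_iff_of_pos_right (sub_pos.2 hat)).1 ht)

theorem HasDerivAt.eventually_nhdsLT_lt (hf : HasDerivAt f (f' a) a) (hpos : 0 < f' a) :
    ∀ᶠ t in 𝓝[<] a, f t < f a := by
  filter_upwards [(hasDerivAt_iff_tendsto_slope_left_right.1 hf).1.eventually
    (eventually_gt_nhds hpos), self_mem_nhdsWithin] with t ht hta
  rw [slope_comm, slope_def_field] at ht
  exact sub_pos.1 ((div_pos_iff_of_pos_right (sub_pos.2 hta)).1 ht)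

theorem exists_first_zero {f : ℝ → ℝ} {a b : ℝ} (hab : a < b) (hf : ContinuousOn f (Icc a b))
    (hpos : ∀ᶠ t in 𝓝[>] a, 0 < f t) (hb : f b ≤ 0) :
    ∃ c ∈ Ioc a b, f c = 0 ∧ ∀ t ∈ Ioo a c, 0 < f t := by
  obtain ⟨u, hau, hu⟩ := mem_nhdsGT_iff_exists_Ioo_subset.1 hpos
  have hub : u ≤ b := by
    by_contra! hbu
    exact (hu ⟨hab, hbu⟩ : 0 < f b).not_ge hb
  obtain ⟨σ, haσ, hσu⟩ := exists_between (mem_Ioi.1 hau)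
  have hS : IsCompact (Icc σ b ∩ f ⁻¹' Iic 0) :=
    isCompact_Icc.of_isClosed_subset (ContinuousOn.preimage_isClosed_of_isClosed
      (hf.mono (Icc_subset_Icc_left haσ.le)) isClosed_Icc isClosed_Iic) inter_subset_left
  obtain ⟨c, ⟨hcσ, hc0⟩, hcmin⟩ := hS.exists_isLeast ⟨b, ⟨hσu.le.trans hub, le_rfl⟩, hb⟩
  have hac : a < c := haσ.trans_le hcσ.1
  have hbefore : ∀ t ∈ Ioo a c, 0 < f t := fun t ht ↦ by
    by_cases htu : t < u
    · exact hu ⟨ht.1, htu⟩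
    · by_contra! hft
      exact ht.2.not_ge (hcmin ⟨⟨by linarith [not_lt.1 htu], ht.2.le.trans hcσ.2⟩, hft⟩)
  have hcont : ContinuousWithinAt f (Iio c) c :=
    (hf c ⟨hac.le, hcσ.2⟩).mono_of_mem_nhdsWithin
      (mem_of_superset (Ioo_mem_nhdsLT hac)
        (Ioo_subset_Icc_self.trans (Icc_subset_Icc_right hcσ.2)))
  refine ⟨c, ⟨hac, hcσ.2⟩, le_antisymm hc0 (ge_of_tendsto hcont ?_), hbefore⟩
  filter_upwards [Ioo_mem_nhdsLT hac] with t ht using (hbefore t ht).le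

end RealCalculus

theorem Filter.Tendsto.div_nhdsGT_zero_atTop {α : Type*} {l : Filter α} {f g : α → ℝ} {C : ℝ}
    (hC : 0 < C) (hf : Tendsto f l (𝓝 C)) (hg : Tendsto g l (𝓝[>] 0)) :
    Tendsto (fun t ↦ f t / g t) l atTop :=
  (hf.pos_mul_atTop hC hg.inv_tendsto_nhdsGT_zero).congr fun _ ↦ (div_eq_mul_inv _ _).symm

theorem Filter.Tendsto.div_nhdsGT_zero_atBot {α : Type*} {l : Filter α} {f g : α → ℝ} {C : ℝ}
    (hC : C < 0) (hf : Tendsto f l (𝓝 C)) (hg : Tendsto g l (𝓝[>] 0)) :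
    Tendsto (fun t ↦ f t / g t) l atBot :=
  (hf.neg_mul_atTop hC hg.inv_tendsto_nhdsGT_zero).congr fun _ ↦ (div_eq_mul_inv _ _).symm

theorem EReal.comap_coe_nhdsGT (a : ℝ) : comap Real.toEReal (𝓝[>] (a : EReal)) = 𝓝[>] a := by
  rw [nhdsWithin, nhdsWithin, comap_inf, comap_principal,
    ← EReal.isEmbedding_coe.isInducing.nhds_eq_comap]
  congr 2
  ext; simp

theorem EReal.comap_coe_nhdsLT (a : ℝ) : comap Real.toEReal (𝓝[<] (a : EReal)) = 𝓝[<] a := by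
  rw [nhdsWithin, nhdsWithin, comap_inf, comap_principal,
    ← EReal.isEmbedding_coe.isInducing.nhds_eq_comap]
  congr 2
  ext; simp

section GlobalExistence

variable {E : Type*} [NormedAddCommGroup E] [NormedSpace ℝ E] [CompleteSpace E]

theorem LipschitzWith.exists_forall_mem_Icc_hasDerivAt {F : E → E} {K : ℝ≥0}
    (hF : LipschitzWith K F) {C : ℝ} (hC : ∀ x, ‖F x‖ ≤ C) (x₀ : E) {T : ℝ} (hT : 0 ≤ T) :
    ∃ α : ℝ → E, α 0 = x₀ ∧ ∀ t ∈ Icc 0 T, HasDerivAt α (F (α t)) t := by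
  have hC0 : 0 ≤ C := (norm_nonneg _).trans (hC x₀)
  have hPL : IsPicardLindelof (fun _ ↦ F) (tmin := -1) (tmax := T + 1)
      ⟨0, by constructor <;> linarith⟩ x₀ ⟨C * (T + 1), by positivity⟩ 0 ⟨C, hC0⟩ K :=
    .of_time_independent (fun x _ ↦ hC x) hF.lipschitzOnWith <| by
      show C * max (T + 1 - 0) (0 - -1) ≤ C * (T + 1) - 0
      rw [max_eq_left (by linarith), sub_zero, sub_zero]
  obtain ⟨α, hα0, hα⟩ := hPL.exists_eq_forall_mem_Icc_hasDerivWithinAt₀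
  exact ⟨α, hα0, fun t ht ↦ (hα t ⟨by linarith [ht.1], by linarith [ht.2]⟩).hasDerivAt
    (Icc_mem_nhds (by linarith [ht.1]) (by linarith [ht.2]))⟩

theorem LocallyLipschitz.exists_forall_mem_Icc_hasDerivAt_comp {G : E → E}
    (hG : LocallyLipschitz G) {π : E → E} {K : ℝ≥0} (hπ : LipschitzWith K π) {s : Set E}
    (hs : IsCompact s) (hπs : ∀ x, π x ∈ s) (x₀ : E) {T : ℝ} (hT : 0 ≤ T) :
    ∃ α : ℝ → E, α 0 = x₀ ∧ ∀ t ∈ Icc 0 T, HasDerivAt α (G (π (α t))) t := by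
  obtain ⟨KG, hKG⟩ := hG.locallyLipschitzOn.exists_lipschitzOnWith_of_compact hs
  obtain ⟨C, hC⟩ := hs.exists_bound_of_continuousOn hG.continuous.continuousOn
  exact LipschitzWith.exists_forall_mem_Icc_hasDerivAt
    (lipschitzOnWith_univ.1 (hKG.comp hπ.lipschitzOnWith fun x _ ↦ hπs x))
    (fun x ↦ hC _ (hπs x)) x₀ hT

end GlobalExistence

section TruncatedPower

variable {n : ℝ}

/- Agrees with `y ^ n` on `[0, 2]`; the truncation makes the oscillator's vector field bounded
and globally Lipschitz. -/
noncomputable def truncPow (n y : ℝ) : ℝ := max 0 (min 2 y) ^ n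

noncomputable def truncPowPotential (n y : ℝ) : ℝ := ∫ s in (0 : ℝ)..y, truncPow n s

theorem max_zero_min_two_mem_Icc (y : ℝ) : max 0 (min 2 y) ∈ Icc (0 : ℝ) 2 :=
  ⟨le_max_left _ _, max_le zero_le_two (min_le_left _ _)⟩

theorem truncPow_nonneg (n y : ℝ) : 0 ≤ truncPow n y :=
  Real.rpow_nonneg (le_max_left _ _) n

theorem truncPow_of_mem {y : ℝ} (hy : y ∈ Icc (0 : ℝ) 2) : truncPow n y = y ^ n := by
  rw [truncPow, min_eq_right hy.2, max_eq_right hy.1]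

theorem truncPow_of_nonpos (hn : n ≠ 0) {y : ℝ} (hy : y ≤ 0) : truncPow n y = 0 := by
  rw [truncPow, min_eq_right (by linarith), max_eq_left hy, Real.zero_rpow hn]

theorem truncPow_le (hn : 0 ≤ n) (y : ℝ) : truncPow n y ≤ 2 ^ n :=
  Real.rpow_le_rpow (le_max_left _ _) (max_zero_min_two_mem_Icc y).2 hn

theorem monotone_truncPow (hn : 0 ≤ n) : Monotone (truncPow n) := fun _ _ h ↦
  Real.rpow_le_rpow (le_max_left _ _) (max_le_max le_rfl (min_le_min le_rfl h)) hn

theorem continuous_truncPow (hn : 0 < n) : Continuous (truncPow n) :=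
  (continuous_const.max (continuous_const.min continuous_id)).rpow_const fun _ ↦ Or.inr hn.le

theorem hasDerivAt_truncPowPotential (hn : 0 < n) (y : ℝ) :
    HasDerivAt (truncPowPotential n) (truncPow n y) y :=
  ((continuous_truncPow hn).integral_hasStrictDerivAt 0 y).hasDerivAt

theorem truncPowPotential_zero (n : ℝ) : truncPowPotential n 0 = 0 :=
  intervalIntegral.integral_same

theorem monotone_truncPowPotential (hn : 0 < n) : Monotone (truncPowPotential n) :=
  monotone_of_hasDerivAt_nonneg (hasDerivAt_truncPowPotential hn) (truncPow_nonneg n)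

theorem truncPowPotential_of_nonpos (hn : n ≠ 0) {y : ℝ} (hy : y ≤ 0) :
    truncPowPotential n y = 0 := by
  rw [truncPowPotential, intervalIntegral.integral_congr (g := fun _ ↦ 0),
    intervalIntegral.integral_zero]
  intro s hs
  rw [uIcc_of_ge hy] at hs
  exact truncPow_of_nonpos hn hs.2

theorem truncPowPotential_nonneg (hn : 0 < n) (y : ℝ) : 0 ≤ truncPowPotential n y := by
  rcases le_total y 0 with hy | hy
  · exact (truncPowPotential_of_nonpos hn.ne' hy).ge
  · exact truncPowPotential_zero n ▸ monotone_truncPowPotential hn hy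

theorem truncPowPotential_le (hn : 0 < n) {y : ℝ} (hy : 0 ≤ y) :
    truncPowPotential n y ≤ 2 ^ n * y := by
  have := le_add_mul_sub_of_hasDerivAt_le (a := 0) (b := y)
    (fun s _ ↦ hasDerivAt_truncPowPotential hn s) (fun s _ ↦ truncPow_le hn.le s) y ⟨hy, le_rfl⟩
  simpa [truncPowPotential_zero] using this

theorem one_le_truncPowPotential_two (hn : 0 < n) : 1 ≤ truncPowPotential n 2 := by
  have := add_mul_sub_le_of_le_hasDerivAt (a := 1) (b := 2) (m := 1)
    (fun s _ ↦ hasDerivAt_truncPowPotential hn s)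
    (fun s hs ↦ truncPow_of_mem ⟨by linarith [hs.1], hs.2⟩ ▸ Real.one_le_rpow hs.1 hn.le) 2
    ⟨one_le_two, le_rfl⟩
  linarith [truncPowPotential_nonneg hn 1]

end TruncatedPower

section DampedOscillator

variable {n ε T : ℝ} {x v : ℝ → ℝ}

def IsTruncOscillatorOn (n ε T : ℝ) (x v : ℝ → ℝ) : Prop :=
  ∀ t ∈ Icc 0 T, HasDerivAt x (v t) t ∧ HasDerivAt v (-ε * v t - truncPow n (x t)) t

noncomputable def oscEnergy (n : ℝ) (x v : ℝ → ℝ) (t : ℝ) : ℝ :=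
  v t ^ 2 / 2 + truncPowPotential n (x t)

theorem sq_le_two_mul_oscEnergy (hn : 0 < n) (t : ℝ) : v t ^ 2 ≤ 2 * oscEnergy n x v t := by
  rw [oscEnergy]
  linarith [truncPowPotential_nonneg hn (x t)]

theorem lt_two_of_oscEnergy_le (hn : 0 < n) {t : ℝ} (hE : oscEnergy n x v t ≤ 1 / 2) :
    x t < 2 := by
  by_contra! hx
  have := (one_le_truncPowPotential_two hn).trans (monotone_truncPowPotential hn hx)
  rw [oscEnergy] at hE
  linarith [sq_nonneg (v t)]

theorem le_of_quarter_le_oscEnergy (hn : 0 < n) {t : ℝ} (hE : 1 / 4 ≤ oscEnergy n x v t)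
    (hv : |v t| ≤ 1 / 2) : 1 / (8 * 2 ^ n) ≤ x t := by
  have hΦ : 1 / 8 ≤ truncPowPotential n (x t) := by
    have : v t ^ 2 ≤ 1 / 4 := by nlinarith [abs_le.1 hv]
    rw [oscEnergy] at hE
    linarith
  have hx : 0 ≤ x t := by
    by_contra! hx
    linarith [truncPowPotential_of_nonpos hn.ne' hx.le]
  rw [div_le_iff₀ (by positivity)]
  linarith [truncPowPotential_le hn hx]

namespace IsTruncOscillatorOn

theorem hasDerivAt_oscEnergy (h : IsTruncOscillatorOn n ε T x v) (hn : 0 < n) {t : ℝ}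
    (ht : t ∈ Icc 0 T) : HasDerivAt (oscEnergy n x v) (-ε * v t ^ 2) t :=
  ((((h t ht).2.pow 2).div_const 2).add
    ((hasDerivAt_truncPowPotential hn (x t)).comp t (h t ht).1)).congr_deriv (by ring)

theorem oscEnergy_le (h : IsTruncOscillatorOn n ε T x v) (hn : 0 < n) (hε : 0 ≤ ε) :
    ∀ t ∈ Icc 0 T, oscEnergy n x v t ≤ oscEnergy n x v 0 := fun t ht ↦ by
  simpa using le_add_mul_sub_of_hasDerivAt_le (m := 0)
    (fun s hs ↦ h.hasDerivAt_oscEnergy hn hs) (fun s _ ↦ by nlinarith [sq_nonneg (v s)]) t ht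

theorem le_oscEnergy (h : IsTruncOscillatorOn n ε T x v) (hn : 0 < n) (hε : 0 ≤ ε) :
    ∀ t ∈ Icc 0 T, (1 - 2 * ε * t) * oscEnergy n x v 0 ≤ oscEnergy n x v t := fun t ht ↦ by
  have := add_mul_sub_le_of_le_hasDerivAt (m := -(2 * ε * oscEnergy n x v 0))
    (fun s hs ↦ h.hasDerivAt_oscEnergy hn hs) (fun s hs ↦ by
      nlinarith [sq_le_two_mul_oscEnergy (x := x) (v := v) hn s, h.oscEnergy_le hn hε s hs]) t ht
  linarith

theorem exists_le_half (h : IsTruncOscillatorOn n ε T x v) (hn : 0 ≤ n) (hε : 0 ≤ ε)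
    (hx0 : x 0 = 0) (hv1 : ∀ t ∈ Icc 0 T, v t ≤ 1) {δ γ : ℝ} (hδ : δ ∈ Icc 0 (1 / 2))
    (hγ : 0 < γ) (hγδ : γ ≤ truncPow n δ) (hT : 1 + 1 / γ ≤ T) :
    ∃ t ∈ Icc 0 (1 + 1 / γ), v t ≤ 1 / 2 := by
  by_contra! hfast
  have hsub : Icc 0 (1 + 1 / γ) ⊆ Icc 0 T := Icc_subset_Icc_right hT
  have hx : ∀ t ∈ Icc 0 (1 + 1 / γ), t / 2 ≤ x t := fun t ht ↦ by
    have := add_mul_sub_le_of_le_hasDerivAt (m := 1 / 2) (fun s hs ↦ (h s (hsub hs)).1)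
      (fun s hs ↦ (hfast s hs).le) t ht
    linarith
  have h1γ : 0 < 1 / γ := by positivity
  have hsub' : Icc (2 * δ) (1 + 1 / γ) ⊆ Icc 0 (1 + 1 / γ) :=
    Icc_subset_Icc_left (by linarith [hδ.1])
  have hv := le_add_mul_sub_of_hasDerivAt_le (m := -γ) (fun s hs ↦ (h s (hsub (hsub' hs))).2)
    (fun s hs ↦ by
      have hxs : δ ≤ x s := by linarith [hx s (hsub' hs), hs.1]
      have := hγδ.trans (monotone_truncPow hn hxs)
      nlinarith [hfast s (hsub' hs)]) (1 + 1 / γ) ⟨by linarith [hδ.2], le_rfl⟩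
  have hstep : γ * (1 + 1 / γ - 2 * δ) ≥ 1 := by
    rw [mul_sub, mul_add, mul_one_div_cancel hγ.ne']
    nlinarith [hδ.2]
  nlinarith [hv1 (2 * δ) (hsub (hsub' ⟨le_rfl, by linarith [hδ.2]⟩)),
    hfast (1 + 1 / γ) ⟨by positivity, le_rfl⟩]

theorem forall_le_of_le (h : IsTruncOscillatorOn n ε T x v) {m : ℝ} (hm : 0 < m)
    (hdecay : ∀ t ∈ Icc 0 T, |v t| ≤ 1 / 2 → -ε * v t - truncPow n (x t) ≤ -m)
    {c s : ℝ} (hc : |c| ≤ 1 / 2) (hs : 0 ≤ s) (hvs : v s ≤ c) : ∀ t ∈ Icc s T, v t ≤ c :=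
  le_of_hasDerivAt_neg_of_eq (fun t ht ↦ (h t ⟨hs.trans ht.1, ht.2⟩).2) hvs fun t ht hvt ↦
    (hdecay t ⟨hs.trans ht.1, ht.2.le⟩ (hvt ▸ hc)).trans_lt (neg_neg_of_pos hm)

theorem exists_le_neg_half (h : IsTruncOscillatorOn n ε T x v) {m : ℝ} (hm : 0 < m)
    (hdecay : ∀ t ∈ Icc 0 T, |v t| ≤ 1 / 2 → -ε * v t - truncPow n (x t) ≤ -m)
    {s : ℝ} (hs : 0 ≤ s) (hsT : s + 1 / m ≤ T) (hvs : v s ≤ 1 / 2) :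
    ∃ t ∈ Icc s (s + 1 / m), v t ≤ -1 / 2 := by
  by_contra! hslow
  have hm' : 0 < 1 / m := by positivity
  have hsub : Icc s (s + 1 / m) ⊆ Icc s T := Icc_subset_Icc_right hsT
  have hhalf := h.forall_le_of_le hm hdecay (by norm_num [abs_of_pos]) hs hvs
  have hbound : ∀ t ∈ Icc s (s + 1 / m), |v t| ≤ 1 / 2 := fun t ht ↦
    abs_le.2 ⟨by linarith [hslow t ht], hhalf t (hsub ht)⟩
  have := le_add_mul_sub_of_hasDerivAt_le (m := -m)
    (fun t ht ↦ (h t ⟨hs.trans ht.1, (hsub ht).2⟩).2)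
    (fun t ht ↦ hdecay t ⟨hs.trans ht.1, (hsub ht).2⟩ (hbound t ht)) (s + 1 / m)
    ⟨by linarith, le_rfl⟩
  rw [add_sub_cancel_left, neg_mul, mul_one_div_cancel hm.ne'] at this
  linarith [hslow (s + 1 / m) ⟨by linarith, le_rfl⟩]

theorem lt_zero_of_le_neg_half (h : IsTruncOscillatorOn n ε T x v) {s : ℝ} (hs : 0 ≤ s)
    (hsT : s + 4 ≤ T) (hxs : x s < 2) (hv : ∀ t ∈ Icc s T, v t ≤ -1 / 2) : x T < 0 := by
  have := le_add_mul_sub_of_hasDerivAt_le (m := -1 / 2)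
    (fun t ht ↦ (h t ⟨hs.trans ht.1, ht.2⟩).1) hv T ⟨by linarith, le_rfl⟩
  linarith

theorem oscEnergy_mem_Icc (h : IsTruncOscillatorOn n ε T x v) (hn : 0 < n) (hε : 0 ≤ ε)
    (hεT : ε * T ≤ 1 / 4) (hx0 : x 0 = 0) (hv0 : v 0 = 1) :
    ∀ t ∈ Icc 0 T, oscEnergy n x v t ∈ Icc (1 / 4) (1 / 2) := by
  have hE0 : oscEnergy n x v 0 = 1 / 2 := by
    rw [oscEnergy, hx0, hv0, truncPowPotential_zero]
    norm_num
  intro t ht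
  have := h.le_oscEnergy hn hε t ht
  rw [hE0] at this
  exact ⟨by nlinarith [mul_le_mul_of_nonneg_left ht.2 hε], hE0 ▸ h.oscEnergy_le hn hε t ht⟩

end IsTruncOscillatorOn

/- `δ = 1 / (8 * 2 ^ n)` is the least position compatible with energy `≥ 1/4` and `|v| ≤ 1/2`
(as `truncPowPotential n x ≤ 2 ^ n * x`), so while `|v| ≤ 1/2` the force is at least `γ = δ ^ n`
and, as `ε ≤ γ`, `v' ≤ -γ / 2`. The three phases take times `1 + 1/γ`, `2/γ` and `4`. -/
theorem IsTruncOscillatorOn.lt_zero_of_oscEnergy_mem_Icc (h : IsTruncOscillatorOn n ε T x v)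
    (hn : 0 < n) (hε : 0 ≤ ε) (hεγ : ε ≤ (1 / (8 * 2 ^ n)) ^ n)
    (hT : 5 + 3 / (1 / (8 * 2 ^ n)) ^ n ≤ T) (hx0 : x 0 = 0)
    (hE : ∀ t ∈ Icc 0 T, oscEnergy n x v t ∈ Icc (1 / 4) (1 / 2)) : x T < 0 := by
  set δ : ℝ := 1 / (8 * 2 ^ n)
  set γ : ℝ := δ ^ n
  have hδ : δ ∈ Icc 0 (1 / 2) := ⟨by positivity, by
    rw [div_le_div_iff₀ (by positivity) two_pos]
    linarith [Real.one_le_rpow one_le_two hn.le]⟩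
  have hγ : 0 < γ := Real.rpow_pos_of_pos (by positivity) n
  have hγδ : γ = truncPow n δ := (truncPow_of_mem ⟨hδ.1, hδ.2.trans (by norm_num)⟩).symm
  have hv1 : ∀ t ∈ Icc 0 T, v t ≤ 1 := fun t ht ↦ by
    nlinarith [sq_le_two_mul_oscEnergy (x := x) (v := v) hn t, (hE t ht).2]
  have hdecay : ∀ t ∈ Icc 0 T, |v t| ≤ 1 / 2 → -ε * v t - truncPow n (x t) ≤ -(γ / 2) :=
    fun t ht hvt ↦ by
      have := monotone_truncPow hn.le (le_of_quarter_le_oscEnergy hn (hE t ht).1 hvt)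
      nlinarith [abs_le.1 hvt]
  have h1γ : 0 < 1 / γ := by positivity
  have h2γ : 1 / (γ / 2) = 2 / γ := one_div_div γ 2
  have h3γ : 3 / γ = 1 / γ + 2 / γ := by ring
  obtain ⟨t₁, ht₁, hvt₁⟩ := h.exists_le_half hn.le hε hx0 hv1 hδ hγ hγδ.le
    (by linarith [show 0 < 2 / γ by positivity])
  obtain ⟨t₂, ht₂, hvt₂⟩ := h.exists_le_neg_half (half_pos hγ) hdecay ht₁.1
    (by linarith [ht₁.2]) hvt₁
  have ht₂0 : 0 ≤ t₂ := ht₁.1.trans ht₂.1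
  have ht₂T : t₂ + 4 ≤ T := by linarith [ht₁.2, ht₂.2]
  exact h.lt_zero_of_le_neg_half ht₂0 ht₂T
    (lt_two_of_oscEnergy_le hn (hE t₂ ⟨ht₂0, by linarith⟩).2)
    (h.forall_le_of_le (half_pos hγ) hdecay (by norm_num [abs_of_neg]) ht₂0 hvt₂)

theorem IsTruncOscillatorOn.exists_first_return (h : IsTruncOscillatorOn n ε T x v)
    (hn : 0 < n) (hε : 0 ≤ ε) (hεγ : ε ≤ (1 / (8 * 2 ^ n)) ^ n) (hεT : ε * T ≤ 1 / 4)
    (hT : 5 + 3 / (1 / (8 * 2 ^ n)) ^ n ≤ T) (hx0 : x 0 = 0) (hv0 : v 0 = 1) :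
    ∃ T₀ ∈ Ioc 0 T, x T₀ = 0 ∧ v T₀ < 0 ∧ ∀ t ∈ Ioo 0 T₀, 0 < x t := by
  have hE := h.oscEnergy_mem_Icc hn hε hεT hx0 hv0
  have hT0 : 0 < T := lt_of_lt_of_le (by positivity) hT
  have hpos : ∀ᶠ t in 𝓝[>] 0, 0 < x t := by
    simpa [hx0] using (h 0 ⟨le_rfl, hT0.le⟩).1.eventually_nhdsGT_lt (hv0 ▸ one_pos)
  obtain ⟨T₀, hT₀, hxT₀, hxpos⟩ := exists_first_zero hT0
    (fun t ht ↦ (h t ht).1.continuousAt.continuousWithinAt) hpos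
    (h.lt_zero_of_oscEnergy_mem_Icc hn hε hεγ hT hx0 hE).le
  refine ⟨T₀, hT₀, hxT₀, ?_, hxpos⟩
  have hT₀' : T₀ ∈ Icc 0 T := Ioc_subset_Icc_self hT₀
  have hv2 : 1 / 2 ≤ v T₀ ^ 2 := by
    have := (hE T₀ hT₀').1
    rw [oscEnergy, hxT₀, truncPowPotential_zero] at this
    linarith
  by_contra! hvT₀
  have hvT₀' : 0 < v T₀ := hvT₀.lt_of_ne' fun h0 ↦ by norm_num [h0] at hv2
  obtain ⟨t, hxt, htT₀⟩ := ((h T₀ hT₀').1.eventually_nhdsLT_lt hvT₀').and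
    (Ioo_mem_nhdsLT hT₀.1) |>.exists
  linarith [hxpos t htT₀]

/- The speed is clamped at `±V` only to make the vector field bounded; the clamp is inactive
because `v ≤ 1` (at `v = 1` the field points down) and `v' ≥ -(1 + 2 ^ n)`. -/
theorem isTruncOscillatorOn_of_clamped {V : ℝ} (hn : 0 ≤ n) (hε : 0 < ε) (hε1 : ε ≤ 1)
    (hV : (1 + 2 ^ n) * T + 1 ≤ V) (hv0 : v 0 = 1)
    (hx : ∀ t ∈ Icc 0 T, HasDerivAt x (max (-V) (min V (v t))) t)
    (hv : ∀ t ∈ Icc 0 T,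
      HasDerivAt v (-ε * max (-V) (min V (v t)) - truncPow n (x t)) t) :
    IsTruncOscillatorOn n ε T x v := by
  intro t ht
  have hV1 : 1 ≤ V := by nlinarith [ht.1.trans ht.2, Real.rpow_nonneg zero_le_two n]
  have hv1 : ∀ s ∈ Icc 0 T, v s ≤ 1 :=
    le_of_hasDerivAt_neg_of_eq hv hv0.le fun s _ hvs ↦ by
      rw [hvs, min_eq_right hV1, max_eq_right (by linarith)]
      linarith [truncPow_nonneg n (x s)]
  have hvlow : ∀ s ∈ Icc 0 T, 1 - (1 + 2 ^ n) * s ≤ v s := fun s hs ↦ by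
    have := add_mul_sub_le_of_le_hasDerivAt (m := -(1 + 2 ^ n)) hv (fun r hr ↦ by
      have hc : max (-V) (min V (v r)) ≤ 1 :=
        max_le (by linarith) ((min_le_right _ _).trans (hv1 r hr))
      nlinarith [truncPow_le hn (x r)]) s hs
    rw [hv0] at this
    linarith
  have hclamp : max (-V) (min V (v t)) = v t := by
    rw [min_eq_right ((hv1 t ht).trans hV1), max_eq_right]
    nlinarith [hvlow t ht, ht.2, Real.rpow_nonneg zero_le_two n]
  exact ⟨hclamp ▸ hx t ht, hclamp ▸ hv t ht⟩

theorem exists_clamped_truncOscillator {n : ℝ} (hn : 1 ≤ n) (ε : ℝ) {V T : ℝ} (hV : 0 ≤ V)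
    (hT : 0 ≤ T) :
    ∃ x v : ℝ → ℝ, x 0 = 0 ∧ v 0 = 1 ∧ ∀ t ∈ Icc 0 T,
      HasDerivAt x (max (-V) (min V (v t))) t ∧
      HasDerivAt v (-ε * max (-V) (min V (v t)) - truncPow n (x t)) t := by
  have hpow : ContDiff ℝ 1 fun y : ℝ ↦ y ^ n :=
    Real.contDiff_rpow_const_of_le (by exact_mod_cast hn)
  have hG : LocallyLipschitz fun p : ℝ × ℝ ↦ (p.2, -ε * p.2 - p.1 ^ n) :=
    (contDiff_snd.prodMk ((contDiff_const.mul contDiff_snd).sub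
      (hpow.comp contDiff_fst))).locallyLipschitz
  have hπ :=
    (((LipschitzWith.id.const_min 2).const_max 0).comp LipschitzWith.prod_fst).prodMk
      (((LipschitzWith.id.const_min V).const_max (-V)).comp LipschitzWith.prod_snd)
  obtain ⟨α, hα0, hα⟩ := hG.exists_forall_mem_Icc_hasDerivAt_comp hπ
    (isCompact_Icc.prod (isCompact_Icc (a := -V) (b := V)))
    (fun p ↦ ⟨max_zero_min_two_mem_Icc p.1,
      le_max_left _ _, max_le (by linarith) (min_le_left _ _)⟩) (0, 1) hT
  refine ⟨fun t ↦ (α t).1, fun t ↦ (α t).2, by simp [hα0], by simp [hα0], fun t ht ↦ ⟨?_, ?_⟩⟩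
  · exact hasFDerivAt_fst.comp_hasDerivAt t (hα t ht)
  · exact hasFDerivAt_snd.comp_hasDerivAt t (hα t ht)

end DampedOscillator

structure IsOscillatorArc (b c n T₀ : ℝ) (X V : ℝ → ℝ) : Prop where
  hasDerivAt_X : ∀ t ∈ Icc 0 T₀, HasDerivAt X (V t) t
  hasDerivAt_V : ∀ t ∈ Icc 0 T₀, HasDerivAt V (-b * V t - c * X t ^ n) t
  X_pos : ∀ t ∈ Ioo 0 T₀, 0 < X t
  X_zero : X 0 = 0
  X_end : X T₀ = 0
  V_zero_pos : 0 < V 0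
  V_end_neg : V T₀ < 0

theorem exists_isOscillatorArc {n : ℝ} (hn : 1 ≤ n) :
    ∃ ε > 0, ∃ T₀ > 0, ∃ x v : ℝ → ℝ, IsOscillatorArc ε 1 n T₀ x v := by
  have hn0 : 0 < n := by linarith
  set γ : ℝ := (1 / (8 * 2 ^ n)) ^ n
  have hγ : 0 < γ := by positivity
  set T : ℝ := 5 + 3 / γ
  have hT : 5 ≤ T := le_add_of_nonneg_right (by positivity)
  set ε : ℝ := min γ (1 / (4 * T))
  have hε : 0 < ε := lt_min hγ (by positivity)
  have hεT : ε * T ≤ 1 / 4 := by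
    calc ε * T ≤ 1 / (4 * T) * T := by gcongr; exact min_le_right _ _
      _ = 1 / 4 := by field_simp
  have hε1 : ε ≤ 1 := by nlinarith
  obtain ⟨x, v, hx0, hv0, hxv⟩ := exists_clamped_truncOscillator hn ε
    (V := (1 + 2 ^ n) * T + 1) (T := T) (by positivity) (by linarith)
  have h := isTruncOscillatorOn_of_clamped (T := T) hn0.le hε hε1 le_rfl hv0
    (fun t ht ↦ (hxv t ht).1) (fun t ht ↦ (hxv t ht).2)
  obtain ⟨T₀, hT₀, hxT₀, hvT₀, hxpos⟩ := h.exists_first_return hn0 hε.le (min_le_left _ _) hεT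
    le_rfl hx0 hv0
  have hE := h.oscEnergy_mem_Icc hn0 hε.le hεT hx0 hv0
  have hxt : ∀ t ∈ Icc 0 T₀, x t ∈ Icc 0 2 := fun t ht ↦ by
    refine ⟨?_, (lt_two_of_oscEnergy_le hn0 (hE t ⟨ht.1, ht.2.trans hT₀.2⟩).2).le⟩
    rcases eq_or_lt_of_le ht.1 with rfl | ht0
    · exact hx0.ge
    rcases eq_or_lt_of_le ht.2 with rfl | htT₀
    · exact hxT₀.ge
    exact (hxpos t ⟨ht0, htT₀⟩).le
  refine ⟨ε, hε, T₀, hT₀.1, x, v, fun t ht ↦ (h t ⟨ht.1, ht.2.trans hT₀.2⟩).1, fun t ht ↦ ?_,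
    hxpos, hx0, hxT₀, hv0 ▸ one_pos, hvT₀⟩
  rw [one_mul, ← truncPow_of_mem (hxt t ht)]
  exact (h t ⟨ht.1, ht.2.trans hT₀.2⟩).2

namespace IsOscillatorArc

variable {b c n T₀ : ℝ} {X V : ℝ → ℝ}

theorem rescale (h : IsOscillatorArc b c n T₀ X V) {κ b' c' : ℝ} (hκ : 0 < κ) (hb : κ * b = b')
    (hc : κ ^ 2 * c = c') :
    IsOscillatorArc b' c' n (T₀ / κ) (fun s ↦ X (κ * s)) (fun s ↦ κ * V (κ * s)) := by
  have hscale : ∀ η, HasDerivAt (fun s ↦ κ * s) κ η := fun η ↦ by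
    simpa using (hasDerivAt_id η).const_mul κ
  have hIcc : ∀ η ∈ Icc 0 (T₀ / κ), κ * η ∈ Icc 0 T₀ := fun η hη ↦
    ⟨mul_nonneg hκ.le hη.1, (le_div_iff₀' hκ).1 hη.2⟩
  have hend : κ * (T₀ / κ) = T₀ := mul_div_cancel₀ T₀ hκ.ne'
  refine ⟨fun η hη ↦ ?_, fun η hη ↦ ?_,
    fun η hη ↦ h.X_pos _ ⟨mul_pos hκ hη.1, (lt_div_iff₀' hκ).1 hη.2⟩,
    by simpa using h.X_zero, by simpa [hend] using h.X_end,
    by simpa using mul_pos hκ h.V_zero_pos,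
    by simpa [hend] using mul_neg_of_pos_of_neg hκ h.V_end_neg⟩
  · exact ((h.hasDerivAt_X _ (hIcc η hη)).comp η (hscale η)).congr_deriv (mul_comm _ _)
  · refine (((h.hasDerivAt_V _ (hIcc η hη)).comp η (hscale η)).const_mul κ).congr_deriv ?_
    rw [← hb, ← hc]
    ring

theorem hasDerivAt_riccati {q : ℝ} (h : IsOscillatorArc b c (q + 1) T₀ X V) {η : ℝ}
    (hη : η ∈ Ioo 0 T₀) :
    HasDerivAt (fun s ↦ V s / X s) (-(V η / X η) ^ 2 - b * (V η / X η) - c * X η ^ q) η ∧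
      HasDerivAt (fun s ↦ c * X s ^ q) (q * (V η / X η) * (c * X η ^ q)) η := by
  have hX0 : X η ≠ 0 := (h.X_pos η hη).ne'
  have hX := h.hasDerivAt_X η (Ioo_subset_Icc_self hη)
  constructor
  · refine ((h.hasDerivAt_V η (Ioo_subset_Icc_self hη)).div hX hX0).congr_deriv ?_
    rw [Real.rpow_add_one hX0]
    field_simp
    ring
  · refine (((Real.hasDerivAt_rpow_const (Or.inl hX0)).comp η hX).const_mul c).congr_deriv ?_
    rw [Real.rpow_sub_one hX0]
    field_simp

theorem tendsto_X_nhdsGT (h : IsOscillatorArc b c n T₀ X V) (hT₀ : 0 < T₀) :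
    Tendsto X (𝓝[>] 0) (𝓝[>] 0) :=
  tendsto_nhdsWithin_iff.2 ⟨h.X_zero ▸ (h.hasDerivAt_X 0 ⟨le_rfl, hT₀.le⟩).continuousAt.tendsto
    |>.mono_left nhdsWithin_le_nhds, mem_of_superset (Ioo_mem_nhdsGT hT₀) h.X_pos⟩

theorem tendsto_X_nhdsLT (h : IsOscillatorArc b c n T₀ X V) (hT₀ : 0 < T₀) :
    Tendsto X (𝓝[<] T₀) (𝓝[>] 0) :=
  tendsto_nhdsWithin_iff.2 ⟨h.X_end ▸ (h.hasDerivAt_X T₀ ⟨hT₀.le, le_rfl⟩).continuousAt.tendsto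
    |>.mono_left nhdsWithin_le_nhds, mem_of_superset (Ioo_mem_nhdsLT hT₀) h.X_pos⟩

theorem tendsto_div_nhdsGT (h : IsOscillatorArc b c n T₀ X V) (hT₀ : 0 < T₀) :
    Tendsto (fun s ↦ V s / X s) (𝓝[>] 0) atTop :=
  ((h.hasDerivAt_V 0 ⟨le_rfl, hT₀.le⟩).continuousAt.tendsto.mono_left nhdsWithin_le_nhds)
    |>.div_nhdsGT_zero_atTop h.V_zero_pos (h.tendsto_X_nhdsGT hT₀)

theorem tendsto_div_nhdsLT (h : IsOscillatorArc b c n T₀ X V) (hT₀ : 0 < T₀) :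
    Tendsto (fun s ↦ V s / X s) (𝓝[<] T₀) atBot :=
  ((h.hasDerivAt_V T₀ ⟨hT₀.le, le_rfl⟩).continuousAt.tendsto.mono_left nhdsWithin_le_nhds)
    |>.div_nhdsGT_zero_atBot h.V_end_neg (h.tendsto_X_nhdsLT hT₀)

end IsOscillatorArc

/-- Existence of a connecting orbit from the critical point at
infinity `Q₂` (where `Y → +∞`) to the critical point at infinity `Q₃` (where
`Y → -∞`) for the planar system `Y' = -Y² - bY - W`, `W' = qYW`: there is a maximal
solution on an interval `(η₋, η₊)` (with `-∞ ≤ η₋ < η₊ ≤ +∞`) along which `W > 0`,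
with `Y → +∞` as `η → η₋⁺` and `Y → -∞` as `η → η₊⁻`. -/
theorem stmt_12 (b q : ℝ) (hb : 0 < b) (hq : 0 < q) :
    ∃ (ηm ηp : EReal) (Y W : ℝ → ℝ), ηm < ηp ∧
      (∀ η : ℝ, ηm < (η : EReal) → (η : EReal) < ηp →
        HasDerivAt Y (-(Y η) ^ 2 - b * Y η - W η) η ∧
        HasDerivAt W (q * Y η * W η) η ∧
        0 < W η) ∧
      Tendsto Y (comap Real.toEReal (𝓝[>] ηm)) atTop ∧
      Tendsto Y (comap Real.toEReal (𝓝[<] ηp)) atBot := by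
  obtain ⟨ε, hε, T₀, hT₀, x, v, h⟩ := exists_isOscillatorArc (n := q + 1) (by linarith)
  set κ := b / ε
  have hκ : 0 < κ := div_pos hb hε
  have harc := h.rescale hκ (div_mul_cancel₀ b hε.ne') (mul_one _)
  have hT : 0 < T₀ / κ := div_pos hT₀ hκ
  refine ⟨(0 : ℝ), (T₀ / κ : ℝ), fun η ↦ κ * v (κ * η) / x (κ * η),
    fun η ↦ κ ^ 2 * x (κ * η) ^ q, EReal.coe_lt_coe_iff.2 hT, fun η h0 hη ↦ ?_, ?_, ?_⟩
  · have hη : η ∈ Ioo 0 (T₀ / κ) := ⟨EReal.coe_lt_coe_iff.1 h0, EReal.coe_lt_coe_iff.1 hη⟩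
    obtain ⟨hY, hW⟩ := harc.hasDerivAt_riccati hη
    exact ⟨hY, hW, mul_pos (pow_pos hκ 2) (Real.rpow_pos_of_pos (harc.X_pos η hη) q)⟩
  · rw [EReal.comap_coe_nhdsGT]
    exact harc.tendsto_div_nhdsGT hT
  · rw [EReal.comap_coe_nhdsLT]
    exact harc.tendsto_div_nhdsLT hT
end
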